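/- Let k ≥ 1, let R = ℂ[x,y]/(x^k), let ȳ denote the image of y in R, and let S be the multiplicative submonoid of R generated by ȳ (the powers of ȳ). Let n ≥ 0 and let M be a finitely generated R-module such that the localization of M at S is a free module of rank n over the localization of R at S. Then there exists a submodule P of M such that P is a free R-module of rank n and the quotient M/P is a finite-dimensional ℂ-vector space. -/

import Mathlib

open MvPolynomial

/-- The ring `R = ℂ[x,y]/(x^k)`. -/
abbrev Rquot (k : ℕ) :=
  MvPolynomial (Fin 2) ℂ ⧸ Ideal.span {(X 0 : MvPolynomial (Fin 2) ℂ) ^ k}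

/-- The image `ȳ` of `y` in `R = ℂ[x,y]/(x^k)`. -/
noncomputable def ybar (k : ℕ) : Rquot k :=
  Ideal.Quotient.mk (Ideal.span {(X 0 : MvPolynomial (Fin 2) ℂ) ^ k}) (X 1)

/-- The multiplicative submonoid of `R` generated by `ȳ` (the powers of `ȳ`). -/
noncomputable def Spow (k : ℕ) : Submonoid (Rquot k) := Submonoid.powers (ybar k)

/-!
Clearing denominators in an `S⁻¹R`-basis of `S⁻¹M` gives elements of `M` whose images are unit
multiples of that basis. Since `ȳ` is a nonzerodivisor (`x` is prime and does not divide `y`),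
they are `R`-linearly independent, and the submodule `P` they span satisfies `S⁻¹P = S⁻¹M`.
Hence the finitely generated module `M/P` is killed by a single power `ȳ^N`, so it is a finitely
generated module over `ℂ[x,y]/(x^k, y^N)`, an algebra generated by two nilpotents and therefore
finite-dimensional over `ℂ`.
-/

open Submodule

section Localization

variable {R : Type*} [CommRing R] {S : Submonoid R} (Rₛ : Type*) [CommRing Rₛ] [Algebra R Rₛ]
  [IsLocalization S Rₛ] {M Mₛ : Type*} [AddCommGroup M] [Module R M] [AddCommGroup Mₛ]
  [Module R Mₛ] [Module Rₛ Mₛ] [IsScalarTower R Rₛ Mₛ] (f : M →ₗ[R] Mₛ) [IsLocalizedModule S f]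

theorem exists_linearIndependent_localized'_span_eq_top (hS : S ≤ nonZeroDivisors R)
    {ι : Type*} (b : Module.Basis ι Rₛ Mₛ) :
    ∃ m : ι → M, LinearIndependent R m ∧ (span R (Set.range m)).localized' Rₛ S f = ⊤ := by
  choose mₛ hmₛ using fun i => IsLocalizedModule.surj S f (b i)
  have hunit (i : ι) : IsUnit (algebraMap R Rₛ (mₛ i).2) := IsLocalization.map_units Rₛ (mₛ i).2
  have hb' : ⇑(b.isUnitSMul hunit) = f ∘ fun i => (mₛ i).1 := by
    ext i
    rw [Module.Basis.isUnitSMul_apply, algebraMap_smul, ← Submonoid.smul_def]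
    exact hmₛ i
  have : FaithfulSMul R Rₛ :=
    (faithfulSMul_iff_algebraMap_injective R Rₛ).2 (IsLocalization.injective Rₛ hS)
  refine ⟨fun i => (mₛ i).1, ?_, ?_⟩
  · exact .of_comp f (hb' ▸ (b.isUnitSMul hunit).linearIndependent.restrict_scalars' R)
  · rw [localized'_span, ← Set.range_comp, ← hb', Module.Basis.span_eq]

theorem forall_exists_smul_eq_zero_of_localized'_eq_top {P : Submodule R M}
    (hP : P.localized' Rₛ S f = ⊤) : ∀ z : M ⧸ P, ∃ s ∈ S, s • z = 0 := by
  have : Subsingleton (Mₛ ⧸ P.localized' Rₛ S f) :=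
    Submodule.Quotient.subsingleton_iff.2 hP
  exact (IsLocalizedModule.subsingleton_iff S (P.toLocalizedQuotient' Rₛ S f)).1 this

end Localization

theorem exists_basis_forall_exists_smul_eq_zero {R M : Type*} [CommRing R] [AddCommGroup M]
    [Module R M] {S : Submonoid R} (hS : S ≤ nonZeroDivisors R) {ι : Type*}
    (b : Module.Basis ι (Localization S) (LocalizedModule S M)) :
    ∃ P : Submodule R M, Nonempty (Module.Basis ι R P) ∧ ∀ z : M ⧸ P, ∃ s ∈ S, s • z = 0 := by
  obtain ⟨m, hm, hspan⟩ :=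
    exists_linearIndependent_localized'_span_eq_top _ (LocalizedModule.mkLinearMap S M) hS b
  exact ⟨_, ⟨.span hm⟩, forall_exists_smul_eq_zero_of_localized'_eq_top _ _ hspan⟩

theorem Module.Finite.exists_mem_forall_smul_eq_zero {R Q : Type*} [CommSemiring R]
    [AddCommMonoid Q] [Module R Q] [Module.Finite R Q] {S : Submonoid R}
    (h : ∀ z : Q, ∃ s ∈ S, s • z = 0) :
    ∃ s ∈ S, ∀ z : Q, s • z = 0 := by
  classical
  obtain ⟨T, hT⟩ := Module.Finite.fg_top (R := R) (M := Q)
  choose s hsS hs using h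
  refine ⟨∏ z ∈ T, s z, prod_mem fun z _ => hsS z, fun z => ?_⟩
  have : ∏ z ∈ T, s z ∈ (⊤ : Submodule R Q).annihilator := by
    rw [← hT, mem_annihilator_span]
    rintro ⟨t, ht⟩
    rw [← Finset.prod_erase_mul _ _ ht, mul_smul, hs, smul_zero]
  exact Submodule.mem_annihilator.1 this z mem_top

theorem IsNilpotent.isIntegral {R A : Type*} [CommRing R] [Ring A] [Algebra R A] {a : A}
    (h : IsNilpotent a) : IsIntegral R a := by
  obtain ⟨N, hN⟩ := h
  exact ⟨Polynomial.X ^ N, Polynomial.monic_X_pow N, by simp [hN]⟩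

theorem Module.finite_of_surjective_of_isNilpotent_X {K B ι : Type*} [CommRing K] [CommRing B]
    [Algebra K B] [Finite ι] (φ : MvPolynomial ι K →ₐ[K] B) (hφ : Function.Surjective φ)
    (hnil : ∀ i, IsNilpotent (φ (MvPolynomial.X i))) : Module.Finite K B := by
  have hgen : Algebra.adjoin K (Set.range (φ ∘ MvPolynomial.X)) = ⊤ := by
    rw [Set.range_comp, ← AlgHom.map_adjoin, MvPolynomial.adjoin_range_X, Algebra.map_top,
      (AlgHom.range_eq_top φ).2 hφ]
  have := Algebra.finite_adjoin_of_finite_of_isIntegral (Set.finite_range (φ ∘ MvPolynomial.X))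
    (by rintro _ ⟨i, rfl⟩; exact (hnil i).isIntegral (R := K))
  rw [hgen] at this
  exact Module.Finite.equiv Subalgebra.topEquiv.toLinearEquiv

theorem Module.finite_of_isTorsionBySet {K A Q : Type*} [CommSemiring K] [CommRing A] [Algebra K A]
    [AddCommGroup Q] [Module A Q] [Module K Q] [IsScalarTower K A Q] [Module.Finite A Q]
    (I : Ideal A) [Module.Finite K (A ⧸ I)] (hQ : Module.IsTorsionBySet A Q I) :
    Module.Finite K Q := by
  let := hQ.module
  have : IsScalarTower A (A ⧸ I) Q := ⟨fun a b q => by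
    induction b using Submodule.Quotient.induction_on with
    | H b => exact mul_smul a b q⟩
  have : Module.Finite (A ⧸ I) Q := Module.Finite.of_restrictScalars_finite A _ _
  exact Module.Finite.trans (A ⧸ I) Q

theorem ybar_mem_nonZeroDivisors (k : ℕ) : ybar k ∈ nonZeroDivisors (Rquot k) := by
  rw [mem_nonZeroDivisors_iff_right]
  intro r hr
  obtain ⟨p, rfl⟩ := Ideal.Quotient.mk_surjective r
  rw [ybar, ← map_mul, Ideal.Quotient.eq_zero_iff_mem, Ideal.mem_span_singleton] at hr
  rw [Ideal.Quotient.eq_zero_iff_mem, Ideal.mem_span_singleton]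
  exact X_prime.pow_dvd_of_dvd_mul_right k (by simp [X_dvd_X]) hr

theorem Spow_le_nonZeroDivisors (k : ℕ) : Spow k ≤ nonZeroDivisors (Rquot k) :=
  Submonoid.powers_le.2 (ybar_mem_nonZeroDivisors k)

theorem finite_quotient_span_ybar_pow (k N : ℕ) :
    Module.Finite ℂ (Rquot k ⧸ Ideal.span {ybar k ^ N}) := by
  let φ : MvPolynomial (Fin 2) ℂ →ₐ[ℂ] Rquot k ⧸ Ideal.span {ybar k ^ N} :=
    (Ideal.Quotient.mkₐ ℂ _).comp (Ideal.Quotient.mkₐ ℂ _)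
  have hφ : Function.Surjective φ :=
    (Ideal.Quotient.mkₐ_surjective ℂ _).comp (Ideal.Quotient.mkₐ_surjective ℂ _)
  refine Module.finite_of_surjective_of_isNilpotent_X (B := Rquot k ⧸ Ideal.span {ybar k ^ N})
    φ hφ fun i => ?_
  fin_cases i
  · refine ⟨k, ?_⟩
    change Ideal.Quotient.mk _ (Ideal.Quotient.mk _ (X 0)) ^ k = 0
    rw [← map_pow, ← map_pow, Ideal.Quotient.eq_zero_iff_mem.2 (Ideal.mem_span_singleton_self _),
      map_zero]
  · refine ⟨N, ?_⟩
    change Ideal.Quotient.mk _ (ybar k) ^ N = 0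
    rw [← map_pow, Ideal.Quotient.eq_zero_iff_mem]
    exact Ideal.mem_span_singleton_self _

theorem exists_maximal_free_submodule (k : ℕ) (n : ℕ)
    (M : Type) [AddCommGroup M] [Module (Rquot k) M] [Module.Finite (Rquot k) M]
    [Module ℂ M] [IsScalarTower ℂ (Rquot k) M]
    (hfree : Nonempty (Module.Basis (Fin n) (Localization (Spow k)) (LocalizedModule (Spow k) M))) :
    ∃ P : Submodule (Rquot k) M,
      Nonempty (Module.Basis (Fin n) (Rquot k) P) ∧ FiniteDimensional ℂ (M ⧸ P) := by
  obtain ⟨b⟩ := hfree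
  obtain ⟨P, hPfree, htors⟩ :=
    exists_basis_forall_exists_smul_eq_zero (Spow_le_nonZeroDivisors k) b
  obtain ⟨_, ⟨N, rfl⟩, hN⟩ := Module.Finite.exists_mem_forall_smul_eq_zero htors
  have := finite_quotient_span_ybar_pow k N
  exact ⟨P, hPfree, Module.finite_of_isTorsionBySet (Ideal.span {ybar k ^ N})
    ((Module.isTorsionBySet_span_singleton_iff _).2 hN)⟩
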